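/- arXiv:2205.06518 — 2 statements merged into one kernel-verified Lean document; each statement's English description precedes it below -/
import Mathlib

section
/- Define the nonoverlapping two-subdomain Schwarz iteration in Fourier space for a fixed mode with symbol λ₀₁, λ₁₀ ∈ ℂ: the interface values satisfy P₀^{n+1} = ρ²·P₀^{n−1} with ρ² = [(λ₀₁ − d₁₀)(λ₁₀ − d₀₁)] / [(λ₀₁ + d₀₁)(λ₁₀ + d₁₀)], where d₀₁ = α·coth(αℓ₀₁), d₁₀ = α·coth(αℓ₁₀), α > 0, ℓ₀₁, ℓ₁₀ > 0, assuming the denominators are nonzero. In particular ρ = 0 if and only if (λ₀₁ − d₁₀)(λ₁₀ − d₀₁) = 0 whenever d₀₁, d₁₀ ≠ −λ₀₁, −λ₁₀. -/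
open Real

noncomputable def coth (x : ℝ) : ℝ := Real.cosh x / Real.sinh x

theorem coupled_recurrence_two_step {K : Type*} [Field K] {a b c d : K} {p q : ℕ → K}
    (ha : a ≠ 0) (hc : c ≠ 0) (hp : ∀ n, p (n + 1) * a = q n * b)
    (hq : ∀ n, q (n + 1) * c = p n * d) (n : ℕ) :
    p (n + 2) = b * d / (a * c) * p n := by
  rw [div_mul_eq_mul_div, eq_div_iff (mul_ne_zero ha hc)]
  linear_combination c * hp (n + 1) + b * hq n

theorem schwarz_convergence_factor_general (α ℓ01 ℓ10 : ℝ) (lam01 lam10 : ℂ) (P0 P1 : ℕ → ℂ)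
    (hd01 : lam01 + (α * coth (α * ℓ01) : ℝ) ≠ 0)
    (hd10 : lam10 + (α * coth (α * ℓ10) : ℝ) ≠ 0)
    (hit0 : ∀ n, P0 (n + 1) * (lam01 + (α * coth (α * ℓ01) : ℝ))
      = P1 n * (lam01 - (α * coth (α * ℓ10) : ℝ)))
    (hit1 : ∀ n, P1 (n + 1) * (lam10 + (α * coth (α * ℓ10) : ℝ))
      = P0 n * (lam10 - (α * coth (α * ℓ01) : ℝ))) :
    (∀ n, P0 (n + 2) =
      ((lam01 - (α * coth (α * ℓ10) : ℝ)) * (lam10 - (α * coth (α * ℓ01) : ℝ)))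
        / ((lam01 + (α * coth (α * ℓ01) : ℝ)) * (lam10 + (α * coth (α * ℓ10) : ℝ)))
      * P0 n) ∧
    (((lam01 - (α * coth (α * ℓ10) : ℝ)) * (lam10 - (α * coth (α * ℓ01) : ℝ)))
        / ((lam01 + (α * coth (α * ℓ01) : ℝ)) * (lam10 + (α * coth (α * ℓ10) : ℝ)))
      = 0
      ↔ (lam01 - (α * coth (α * ℓ10) : ℝ)) * (lam10 - (α * coth (α * ℓ01) : ℝ)) = 0) :=
  ⟨coupled_recurrence_two_step hd01 hd10 hit0 hit1,
    div_eq_zero_iff.trans (or_iff_left (mul_ne_zero hd01 hd10))⟩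

/-- Nonoverlapping two-subdomain Schwarz iteration in Fourier space:
with DtN quantities `d₀₁ = α coth(αℓ₀₁)`, `d₁₀ = α coth(αℓ₁₀)`, the interface
traces satisfy `P₀^{n+2} = ρ² P₀^{n}` with
`ρ² = (λ₀₁-d₁₀)(λ₁₀-d₀₁)/((λ₀₁+d₀₁)(λ₁₀+d₁₀))`; moreover `ρ² = 0` iff
`(λ₀₁-d₁₀)(λ₁₀-d₀₁) = 0`. -/
theorem schwarz_convergence_factor (α ℓ01 ℓ10 : ℝ) (hα : 0 < α)
    (h01 : 0 < ℓ01) (h10 : 0 < ℓ10) (lam01 lam10 : ℂ) (P0 P1 : ℕ → ℂ)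
    (hd01 : lam01 + (α * coth (α * ℓ01) : ℝ) ≠ 0)
    (hd10 : lam10 + (α * coth (α * ℓ10) : ℝ) ≠ 0)
    (hit0 : ∀ n, P0 (n + 1) * (lam01 + (α * coth (α * ℓ01) : ℝ))
      = P1 n * (lam01 - (α * coth (α * ℓ10) : ℝ)))
    (hit1 : ∀ n, P1 (n + 1) * (lam10 + (α * coth (α * ℓ10) : ℝ))
      = P0 n * (lam10 - (α * coth (α * ℓ01) : ℝ))) :
    (∀ n, P0 (n + 2) =
      ((lam01 - (α * coth (α * ℓ10) : ℝ)) * (lam10 - (α * coth (α * ℓ01) : ℝ)))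
        / ((lam01 + (α * coth (α * ℓ01) : ℝ)) * (lam10 + (α * coth (α * ℓ10) : ℝ)))
      * P0 n) ∧
    (((lam01 - (α * coth (α * ℓ10) : ℝ)) * (lam10 - (α * coth (α * ℓ01) : ℝ)))
        / ((lam01 + (α * coth (α * ℓ01) : ℝ)) * (lam10 + (α * coth (α * ℓ10) : ℝ)))
      = 0
      ↔ (lam01 - (α * coth (α * ℓ10) : ℝ)) * (lam10 - (α * coth (α * ℓ01) : ℝ)) = 0) :=
  schwarz_convergence_factor_general α ℓ01 ℓ10 lam01 lam10 P0 P1 hd01 hd10 hit0 hit1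
end

section
/- With the evanescent-mode choice λ_{ij} = √(s²−k²) (s² > k²) in the two-subdomain Schwarz iteration for the rectangular cavity, |ρ(s)| = exp(−ℓ√(s²−k²)) where ℓ = ℓ₀₁ + ℓ₁₀, i.e. [(1−coth(βℓ₁₀))(1−coth(βℓ₀₁))]/[(1+coth(βℓ₀₁))(1+coth(βℓ₁₀))] = exp(−2βℓ) with β = √(s²−k²) > 0. -/
open Real

lemma one_sub_coth (x : ℝ) (hx : 0 < x) :
    1 - coth x = -Real.exp (-x) / Real.sinh x := by
  have hs : Real.sinh x ≠ 0 := ne_of_gt (Real.sinh_pos_iff.mpr hx)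
  unfold coth
  field_simp
  simp only [Real.cosh_eq, Real.sinh_eq]
  ring

lemma one_add_coth (x : ℝ) (hx : 0 < x) :
    1 + coth x = Real.exp x / Real.sinh x := by
  have hs : Real.sinh x ≠ 0 := ne_of_gt (Real.sinh_pos_iff.mpr hx)
  unfold coth
  field_simp
  simp only [Real.cosh_eq, Real.sinh_eq]
  ring

/-- Evanescent-mode Schwarz convergence factor with the unbounded symbol:
`[(1-coth(βℓ₁₀))(1-coth(βℓ₀₁))]/[(1+coth(βℓ₀₁))(1+coth(βℓ₁₀))] = exp(-2β(ℓ₀₁+ℓ₁₀))`. -/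
theorem evanescent_convergence_factor (β ℓ01 ℓ10 : ℝ) (hβ : 0 < β)
    (h01 : 0 < ℓ01) (h10 : 0 < ℓ10) :
    ((1 - coth (β * ℓ10)) * (1 - coth (β * ℓ01)))
      / ((1 + coth (β * ℓ01)) * (1 + coth (β * ℓ10)))
      = Real.exp (-2 * β * (ℓ01 + ℓ10)) := by
  have hx01 : 0 < β * ℓ01 := mul_pos hβ h01
  have hx10 : 0 < β * ℓ10 := mul_pos hβ h10
  have hs01 : Real.sinh (β * ℓ01) ≠ 0 := ne_of_gt (Real.sinh_pos_iff.mpr hx01)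
  have hs10 : Real.sinh (β * ℓ10) ≠ 0 := ne_of_gt (Real.sinh_pos_iff.mpr hx10)
  rw [one_sub_coth _ hx01, one_sub_coth _ hx10, one_add_coth _ hx01,
    one_add_coth _ hx10]
  have he01 : Real.exp (β * ℓ01) ≠ 0 := Real.exp_ne_zero _
  have he10 : Real.exp (β * ℓ10) ≠ 0 := Real.exp_ne_zero _
  field_simp
  rw [show (-(β * 2 * (ℓ01 + ℓ10))) = (-(β*ℓ10) + -(β*ℓ01)) - (β*ℓ01 + β*ℓ10) by ring,
    Real.exp_sub, Real.exp_add, Real.exp_add]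
  field_simp
end
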